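/- The copula correlation Ccor is robust-equitable: if a copula C decomposes as C = p·C_s + (1-p)·Π, where C_s is a singular copula (a copula supported on a Borel set S of Lebesgue measure zero) and Π is the independence copula (Lebesgue measure on [0,1]²), then Ccor(C) = p, i.e., the total variation distance between the measures C and Π equals p. -/
import Mathlib

open MeasureTheory Set

/-- The unit square `[0,1] × [0,1]` in `ℝ × ℝ`. -/
def unitSq : Set (ℝ × ℝ) := Set.Icc 0 1 ×ˢ Set.Icc 0 1

/-- The independence copula `Π`: Lebesgue measure restricted to the unit square. -/
noncomputable def indepCopula : Measure (ℝ × ℝ) := volume.restrict unitSq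

/-- The total variation distance between two finite measures, as the supremum over
measurable sets of the absolute difference of the masses. -/
noncomputable def tvDist (μ ν : Measure (ℝ × ℝ)) : ℝ :=
  ⨆ A : {s : Set (ℝ × ℝ) // MeasurableSet s}, |(μ A.1).toReal - (ν A.1).toReal|

lemma vol_unitSq : (volume : Measure (ℝ × ℝ)) unitSq = 1 := by
  rw [unitSq, Measure.volume_eq_prod, Measure.prod_prod, Real.volume_Icc]
  norm_num

lemma indep_le_one (A : Set (ℝ × ℝ)) : indepCopula A ≤ 1 := by
  calc indepCopula A ≤ indepCopula univ := measure_mono (subset_univ A)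
    _ ≤ volume unitSq := by
        rw [indepCopula, Measure.restrict_apply_univ]
    _ = 1 := vol_unitSq

/-- Robust-equitability of the copula correlation: if `C = p • C_s + (1 - p) • Π` where
`C_s` is a singular copula (a probability measure on the unit square mutually singular
with Lebesgue measure) and `Π` is the independence copula, then the total variation
distance between `C` and `Π` equals `p`. -/
theorem ccor_robust_equitable
    (p : ℝ) (hp0 : 0 ≤ p) (hp1 : p ≤ 1)
    (Cs : Measure (ℝ × ℝ)) [IsProbabilityMeasure Cs]
    (hCs_supp : Cs unitSq = 1)
    (hCs_sing : Cs ⟂ₘ (volume : Measure (ℝ × ℝ)))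
    (C : Measure (ℝ × ℝ))
    (hC : C = ENNReal.ofReal p • Cs + ENNReal.ofReal (1 - p) • indepCopula) :
    tvDist C indepCopula = p := by
  have key : ∀ A : Set (ℝ × ℝ),
      (C A).toReal - (indepCopula A).toReal
        = p * ((Cs A).toReal - (indepCopula A).toReal) := by
    intro A
    have hCs_fin : Cs A ≠ ⊤ := measure_ne_top Cs A
    have hI_fin : indepCopula A ≠ ⊤ :=
      (lt_of_le_of_lt (indep_le_one A) ENNReal.one_lt_top).ne
    have : C A = ENNReal.ofReal p * Cs A + ENNReal.ofReal (1 - p) * indepCopula A := by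
      simp [hC, Measure.add_apply]
    rw [this, ENNReal.toReal_add (by finiteness) (by finiteness),
      ENNReal.toReal_mul, ENNReal.toReal_mul, ENNReal.toReal_ofReal hp0,
      ENNReal.toReal_ofReal (by linarith)]
    ring
  have habs : ∀ A : {s : Set (ℝ × ℝ) // MeasurableSet s},
      |(C A.1).toReal - (indepCopula A.1).toReal| ≤ p := by
    intro A
    rw [key A.1, abs_mul, abs_of_nonneg hp0]
    have h1 : (Cs A.1).toReal ≤ 1 := by
      have := measure_mono (subset_univ A.1) (μ := Cs)
      simp only [measure_univ] at this
      simpa using ENNReal.toReal_mono (by simp) this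
    have h2 : (indepCopula A.1).toReal ≤ 1 := by
      simpa using ENNReal.toReal_mono (by simp) (indep_le_one A.1)
    have h3 : |(Cs A.1).toReal - (indepCopula A.1).toReal| ≤ 1 := by
      rw [abs_le]
      constructor <;> nlinarith [ENNReal.toReal_nonneg (a := Cs A.1),
        ENNReal.toReal_nonneg (a := indepCopula A.1)]
    nlinarith
  obtain ⟨S, hSm, hS0, hSc0⟩ := hCs_sing
  have hCsS : Cs Sᶜ = 1 := by
    rw [measure_compl hSm (by finiteness), hS0, measure_univ]; simp
  have hIS : indepCopula Sᶜ = 0 := by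
    have := Measure.restrict_le_self (μ := (volume : Measure (ℝ × ℝ))) (s := unitSq) Sᶜ
    rw [hSc0] at this
    exact le_antisymm (by simpa [indepCopula] using this) bot_le
  apply le_antisymm
  · exact ciSup_le habs
  · have hbdd : BddAbove (Set.range fun A : {s : Set (ℝ × ℝ) // MeasurableSet s} =>
        |(C A.1).toReal - (indepCopula A.1).toReal|) := by
      refine ⟨p, ?_⟩
      rintro x ⟨A, rfl⟩
      exact habs A
    have := le_ciSup hbdd (⟨Sᶜ, hSm.compl⟩ : {s : Set (ℝ × ℝ) // MeasurableSet s})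
    refine le_trans ?_ this
    show p ≤ |(C Sᶜ).toReal - (indepCopula Sᶜ).toReal|
    rw [key, hCsS, hIS]
    simp [abs_of_nonneg hp0]
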